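/- For every sufficiently large n the following holds: if g and g' are words over S_n of length at most r_n = 2^{⌊n/2⌋}, and σ, σ' ∈ T_n are generators of two distinct types, both of type 2, 3, or 4, then the conjugates σ^g = g^{-1}σg and (σ')^{g'} = (g')^{-1}σ'g' commute in V_{Y_n}. -/

import Mathlib

noncomputable section

/-! ### Generalities: the group of self-homeomorphisms -/

instance homeoGroup {X : Type*} [TopologicalSpace X] : Group (X ≃ₜ X) where
  mul f g := g.trans f
  one := Homeomorph.refl X
  inv := Homeomorph.symm
  mul_assoc a b c := Homeomorph.ext fun _ => rfl
  one_mul a := Homeomorph.ext fun _ => rfl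
  mul_one a := Homeomorph.ext fun _ => rfl
  inv_mul_cancel a := Homeomorph.ext a.symm_apply_apply

/-! ### Homeomorphisms of a product with a discrete factor -/

theorem cont_fibered {X Y Z : Type*} [TopologicalSpace X] [TopologicalSpace Y]
    [DiscreteTopology Y] [TopologicalSpace Z] (f : X → Y → Z) (hf : ∀ y, Continuous (f · y)) :
    Continuous (fun p : X × Y => f p.1 p.2) := by
  rw [continuous_iff_continuousAt]
  rintro ⟨x, y⟩
  have hmem : {p : X × Y | p.2 = y} ∈ nhds (x, y) := by
    have ho : IsOpen {p : X × Y | p.2 = y} := by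
      have h : ({p : X × Y | p.2 = y}) = Prod.snd ⁻¹' {y} := rfl
      rw [h]; exact (isOpen_discrete _).preimage continuous_snd
    exact ho.mem_nhds rfl
  refine ContinuousAt.congr (((hf y).comp continuous_fst).continuousAt) ?_
  filter_upwards [hmem] with p hp
  simp [hp]

/-- The homeomorphism of `X × Y`, `Y` discrete, acting on each fiber `X × {y}`
by the homeomorphism `F y`. -/
def fiberedHomeo {X Y : Type*} [TopologicalSpace X] [TopologicalSpace Y] [DiscreteTopology Y]
    (F : Y → X ≃ₜ X) : (X × Y) ≃ₜ (X × Y) where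
  toEquiv := Equiv.prodCongrLeft fun y => (F y).toEquiv
  continuous_toFun := by
    refine Continuous.prodMk ?_ continuous_snd
    exact cont_fibered (fun x y => F y x) (fun y => (F y).continuous)
  continuous_invFun := by
    refine Continuous.prodMk ?_ continuous_snd
    exact cont_fibered (fun x y => (F y).symm x) (fun y => (F y).symm.continuous)

/-- The homeomorphism of `X × Y`, `Y` discrete, permuting the fibers according to a
permutation of `Y` and acting trivially in the `X`-coordinate. -/
def basePermHomeo {X Y : Type*} [TopologicalSpace X] [TopologicalSpace Y] [DiscreteTopology Y]
    (e : Equiv.Perm Y) : (X × Y) ≃ₜ (X × Y) where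
  toEquiv := Equiv.prodCongr (Equiv.refl X) e
  continuous_toFun :=
    continuous_fst.prodMk (continuous_of_discreteTopology.comp continuous_snd)
  continuous_invFun :=
    continuous_fst.prodMk (continuous_of_discreteTopology.comp continuous_snd)

/-! ### The Cantor set -/

/-- The Cantor set `{0,1}^ℕ`. -/
abbrev Cantor : Type := ℕ → Bool

/-- Prepending a finite word to an element of the Cantor set. -/
def wordAppend (w : List Bool) (ξ : Cantor) : Cantor :=
  fun n => if h : n < w.length then w[n] else ξ (n - w.length)

/-- A dyadic partition set: a finite set of binary words whose cylinders partition
the Cantor set. -/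
def IsDyadicPartition (A : Finset (List Bool)) : Prop :=
  ∀ ξ : Cantor, ∃! w : List Bool, w ∈ A ∧ ∃ ξ' : Cantor, wordAppend w ξ' = ξ

/-- The defining condition for elements of Thompson's group `V`: a homeomorphism of the
Cantor set given by prefix replacement along a bijection of two dyadic partition sets. -/
def IsThompsonVMap (γ : Cantor ≃ₜ Cantor) : Prop :=
  ∃ (A B : Finset (List Bool)) (f : List Bool → List Bool),
    IsDyadicPartition A ∧ IsDyadicPartition B ∧ A.card = B.card ∧ Set.BijOn f A B ∧
    ∀ w ∈ A, ∀ ξ : Cantor, γ (wordAppend w ξ) = wordAppend (f w) ξ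

/-- Thompson's group `V`, as a group of homeomorphisms of the Cantor set. -/
def ThompsonV : Subgroup (Cantor ≃ₜ Cantor) :=
  Subgroup.closure {γ | IsThompsonVMap γ}

theorem cantor_core_continuous (G : ℕ → Bool → Bool → Bool → Bool → Bool → Bool → Bool) :
    Continuous (fun ξ : Cantor =>
      (fun n => G n (ξ 0) (ξ 1) (ξ 2) (ξ (n - 1)) (ξ n) (ξ (n + 1)) : Cantor)) := by
  apply continuous_pi
  intro n
  have h : Continuous (fun ξ : Cantor =>
      ((ξ 0, ξ 1, ξ 2, ξ (n - 1), ξ n, ξ (n + 1)) : Bool × Bool × Bool × Bool × Bool × Bool)) :=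
    (continuous_apply 0).prodMk ((continuous_apply 1).prodMk
      ((continuous_apply 2).prodMk ((continuous_apply (n-1)).prodMk
      ((continuous_apply n).prodMk (continuous_apply (n+1))))))
  exact (continuous_of_discreteTopology
    (f := fun p : Bool × Bool × Bool × Bool × Bool × Bool =>
      G n p.1 p.2.1 p.2.2.1 p.2.2.2.1 p.2.2.2.2.1 p.2.2.2.2.2)).comp h

def consC (b : Bool) (ξ : Cantor) : Cantor := fun n => match n with
  | 0 => b
  | n+1 => ξ n

def shiftC (ξ : Cantor) : Cantor := fun n => ξ (n + 1)

theorem consC_continuous (b : Bool) : Continuous (consC b) := by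
  apply continuous_pi
  intro n
  match n with
  | 0 => exact continuous_const
  | n+1 => exact continuous_apply n

theorem shiftC_continuous : Continuous shiftC :=
  continuous_pi fun n => continuous_apply (n + 1)

/-! ### Thompson's generator `X₀` as a homeomorphism of the Cantor set -/

def x0core (n : ℕ) (b0 b1 : Bool) (w v u : Bool) : Bool :=
  if b0 = false then
    (if b1 = false then u
     else if n = 0 then true else if n = 1 then false else v)
  else (if n ≤ 1 then true else w)

def x0invcore (n : ℕ) (b0 b1 : Bool) (w v u : Bool) : Bool :=
  if b0 = false then (if n ≤ 1 then false else w)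
  else if b1 = false then (if n = 0 then false else if n = 1 then true else v)
  else (if n = 0 then true else u)

/-- `X₀ : 00ξ ↦ 0ξ`, `01ξ ↦ 10ξ`, `1ξ ↦ 11ξ`. -/
def x0fun (ξ : Cantor) : Cantor := fun n => x0core n (ξ 0) (ξ 1) (ξ (n - 1)) (ξ n) (ξ (n + 1))

def x0inv (ξ : Cantor) : Cantor := fun n => x0invcore n (ξ 0) (ξ 1) (ξ (n - 1)) (ξ n) (ξ (n + 1))

theorem x0_left_inv : Function.LeftInverse x0inv x0fun := by
  intro ξ
  funext n
  rcases hb0 : ξ 0 with _ | _ <;> rcases hb1 : ξ 1 with _ | _ <;>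
    rcases n with _ | _ | n <;>
    simp [x0fun, x0inv, x0core, x0invcore, hb0, hb1]

theorem x0_right_inv : Function.RightInverse x0inv x0fun := by
  intro ξ
  funext n
  rcases hb0 : ξ 0 with _ | _ <;> rcases hb1 : ξ 1 with _ | _ <;>
    rcases n with _ | _ | n <;>
    simp [x0fun, x0inv, x0core, x0invcore, hb0, hb1]

/-- Thompson's generator `X₀` as a homeomorphism of the Cantor set. -/
def X0c : Cantor ≃ₜ Cantor where
  toEquiv := ⟨x0fun, x0inv, x0_left_inv, x0_right_inv⟩
  continuous_toFun := cantor_core_continuous fun n b0 b1 _ w v u => x0core n b0 b1 w v u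
  continuous_invFun := cantor_core_continuous fun n b0 b1 _ w v u => x0invcore n b0 b1 w v u

/-- The homeomorphism `Cantor ≃ₜ Cantor × Bool` splitting off the first letter. -/
def splitHomeo : Cantor ≃ₜ Cantor × Bool where
  toEquiv := ⟨fun ξ => (shiftC ξ, ξ 0), fun p => consC p.2 p.1,
    fun ξ => by funext n; rcases n with _ | n <;> rfl,
    fun p => by
      refine Prod.ext ?_ rfl
      funext n; rfl⟩
  continuous_toFun := shiftC_continuous.prodMk (continuous_apply 0)
  continuous_invFun := by
    apply continuous_pi
    intro n
    match n with
    | 0 => exact continuous_snd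
    | n+1 => exact (continuous_apply n).comp continuous_fst

/-- Thompson's generator `X₁ = 1X₀`: the copy of `X₀` supported on the cylinder `1C`. -/
def X1c : Cantor ≃ₜ Cantor :=
  splitHomeo.trans ((fiberedHomeo fun b =>
    if b = true then X0c else Homeomorph.refl Cantor).trans splitHomeo.symm)

end

noncomputable section

/-! ### The Grigorchuk generators -/

namespace Grig

def aFun : List Bool → List Bool
  | [] => []
  | x :: w => (!x) :: w

mutual
  def bFun : List Bool → List Bool
    | [] => []
    | false :: w => false :: aFun w
    | true :: w => true :: cFun w
  def cFun : List Bool → List Bool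
    | [] => []
    | false :: w => false :: aFun w
    | true :: w => true :: dFun w
  def dFun : List Bool → List Bool
    | [] => []
    | false :: w => false :: w
    | true :: w => true :: bFun w
end

theorem aFun_involutive : Function.Involutive aFun := by
  intro w
  match w with
  | [] => rfl
  | x :: w => simp [aFun]

theorem bcd_involutive :
    ∀ w : List Bool, bFun (bFun w) = w ∧ cFun (cFun w) = w ∧ dFun (dFun w) = w := by
  intro w
  induction w with
  | nil => exact ⟨rfl, rfl, rfl⟩
  | cons x w ih =>
    rcases x with _ | _
    · simp [bFun, cFun, dFun, aFun_involutive w]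
    · simp [bFun, cFun, dFun, ih.1, ih.2.1, ih.2.2]

theorem bFun_involutive : Function.Involutive bFun := fun w => (bcd_involutive w).1
theorem cFun_involutive : Function.Involutive cFun := fun w => (bcd_involutive w).2.1
theorem dFun_involutive : Function.Involutive dFun := fun w => (bcd_involutive w).2.2

theorem aFun_length : ∀ w : List Bool, (aFun w).length = w.length := by
  intro w
  match w with
  | [] => rfl
  | x :: w => simp [aFun]

theorem bcd_length : ∀ w : List Bool,
    (bFun w).length = w.length ∧ (cFun w).length = w.length ∧ (dFun w).length = w.length := by
  intro w
  induction w with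
  | nil => exact ⟨rfl, rfl, rfl⟩
  | cons x w ih =>
    rcases x with _ | _
    · simp [bFun, cFun, dFun, aFun_length w]
    · simp [bFun, cFun, dFun, ih.1, ih.2.1, ih.2.2]

theorem bFun_length : ∀ w, (bFun w).length = w.length := fun w => (bcd_length w).1
theorem cFun_length : ∀ w, (cFun w).length = w.length := fun w => (bcd_length w).2.1
theorem dFun_length : ∀ w, (dFun w).length = w.length := fun w => (bcd_length w).2.2

/-- The generators of the first Grigorchuk group as permutations of the vertex set
`{0,1}*` of the rooted binary tree. -/
def aPerm : Equiv.Perm (List Bool) := aFun_involutive.toPerm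
def bPerm : Equiv.Perm (List Bool) := bFun_involutive.toPerm
def cPerm : Equiv.Perm (List Bool) := cFun_involutive.toPerm
def dPerm : Equiv.Perm (List Bool) := dFun_involutive.toPerm

/-- The generating set `S = {a, b, c, d}` (a set of involutions). -/
def Sset : Set (Equiv.Perm (List Bool)) := {aPerm, bPerm, cPerm, dPerm}

/-- The first Grigorchuk group. -/
def Grigorchuk : Subgroup (Equiv.Perm (List Bool)) := Subgroup.closure Sset

/-- Word length with respect to `S = {a, b, c, d}`. -/
def wordLength (g : Equiv.Perm (List Bool)) : ℕ :=
  sInf {k | ∃ l : List (Equiv.Perm (List Bool)),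
    (∀ x ∈ l, x ∈ Sset) ∧ l.length = k ∧ l.prod = g}

/-- The growth function of the first Grigorchuk group with respect to `S`. -/
def growthGrig (m : ℕ) : ℕ :=
  Nat.card {g : Equiv.Perm (List Bool) |
    ∃ l : List (Equiv.Perm (List Bool)), (∀ x ∈ l, x ∈ Sset) ∧ l.length ≤ m ∧ l.prod = g}

/-! ### Level transfer -/

def levelFun (n : ℕ) (f : List Bool → List Bool) (v : Fin n → Bool) : Fin n → Bool :=
  fun i => (f (List.ofFn v)).getD i false

theorem levelFun_involutive (n : ℕ) (f : List Bool → List Bool)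
    (hlen : ∀ l, (f l).length = l.length) (hinv : Function.Involutive f) :
    Function.Involutive (levelFun n f) := by
  intro v
  have key : ∀ u : Fin n → Bool, List.ofFn (levelFun n f u) = f (List.ofFn u) := by
    intro u
    apply List.ext_getElem
    · simp [hlen]
    · intro i h1 h2
      simp only [List.getElem_ofFn]
      simp [levelFun, List.getD_eq_getElem, h2]
  funext i
  simp only [levelFun, key v, hinv (List.ofFn v)]
  simp [List.getD_eq_getElem]

/-- The images `a_n, b_n, c_n, d_n` of the Grigorchuk generators in `Sym(X_n)`,
where the `n`-th level `X_n = {0,1}^n` is identified with `Fin n → Bool`. -/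
def aLev (n : ℕ) : Equiv.Perm (Fin n → Bool) :=
  (levelFun_involutive n aFun aFun_length aFun_involutive).toPerm
def bLev (n : ℕ) : Equiv.Perm (Fin n → Bool) :=
  (levelFun_involutive n bFun bFun_length bFun_involutive).toPerm
def cLev (n : ℕ) : Equiv.Perm (Fin n → Bool) :=
  (levelFun_involutive n cFun cFun_length cFun_involutive).toPerm
def dLev (n : ℕ) : Equiv.Perm (Fin n → Bool) :=
  (levelFun_involutive n dFun dFun_length dFun_involutive).toPerm

end Grig

/-! ### The space `C_{Y_n}` and the generating set `T_n` -/

namespace TV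

/-- The `n`-th level `X_n = {0,1}^n` of the binary tree. -/
abbrev XL (n : ℕ) : Type := Fin n → Bool

/-- `C_{Y_n} = C × Y_n` with `Y_n = X_n × {1,2,3,4}`; the sheets are indexed by `Fin 4`. -/
abbrev Mn (n : ℕ) : Type := Cantor × (XL n × Fin 4)

/-- `ρ_n = 1^n`. -/
def rhoL (n : ℕ) : XL n := fun _ => true
/-- `η_n = 1^{n-1}0`. -/
def etaL (n : ℕ) : XL n := fun i => decide ((i : ℕ) < n - 1)
/-- `θ_n = 01^{n-1}`. -/
def thetaL (n : ℕ) : XL n := fun i => decide (0 < (i : ℕ))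

/-- A type 1 generator: an element of `S_n` acting diagonally on the four sheets. -/
def type1Gen (n : ℕ) (s : Equiv.Perm (XL n)) : Mn n ≃ₜ Mn n :=
  basePermHomeo (s.prodCongr (Equiv.refl (Fin 4)))

/-- The set of type 1 generators (the truncated Grigorchuk generators). -/
def Type1Set (n : ℕ) : Set (Mn n ≃ₜ Mn n) :=
  {type1Gen n (Grig.aLev n), type1Gen n (Grig.bLev n),
   type1Gen n (Grig.cLev n), type1Gen n (Grig.dLev n)}

/-- A type 2 generator: an element of `Sym(4)_{η_n}`. -/
def type2Gen (n : ℕ) (π : Equiv.Perm (Fin 4)) : Mn n ≃ₜ Mn n :=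
  basePermHomeo (Equiv.prodCongrRight fun x : XL n =>
    if x = etaL n then π else Equiv.refl (Fin 4))

/-- The copy `Sym(4)_{η_n}` of the symmetric group over `η_n` (type 2 generators). -/
def Type2Set (n : ℕ) : Set (Mn n ≃ₜ Mn n) := Set.range (type2Gen n)

/-- The linking transposition `τ_n` (type 3), exchanging the first sheets over
`ρ_n` and `θ_n`. -/
def tauN (n : ℕ) : Mn n ≃ₜ Mn n :=
  basePermHomeo (Equiv.swap (rhoL n, (0 : Fin 4)) (thetaL n, (0 : Fin 4)))

/-- `X₁^{(n)}`: the copy of `X₀` supported on the fourth sheet over `ρ_n` (type 4). -/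
def X1n (n : ℕ) : Mn n ≃ₜ Mn n :=
  fiberedHomeo fun y : XL n × Fin 4 =>
    if y = (rhoL n, (3 : Fin 4)) then X0c else Homeomorph.refl Cantor

/-! The homeomorphism of `C × {1,2,3,4}` acting as `X₀` on `D = C_2 ⊔ C_3` (sheets `1`, `2`
in the `Fin 4` indexing) under the identification `(ξ, i) ↦ (i-2)ξ`, and trivial elsewhere. -/

def x0dSheet (i : Fin 4) (b0 : Bool) : Fin 4 :=
  if i = 1 then (if b0 = false then 1 else 2) else i

def x0dCore (i : Fin 4) (n : ℕ) (b0 w v u : Bool) : Bool :=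
  if i = 1 then (if b0 = false then u else if n = 0 then false else v)
  else if i = 2 then (if n = 0 then true else w)
  else v

def x0dSheetInv (i : Fin 4) (b0 : Bool) : Fin 4 :=
  if i = 2 then (if b0 = false then 1 else 2) else i

def x0dCoreInv (i : Fin 4) (n : ℕ) (b0 w v u : Bool) : Bool :=
  if i = 1 then (if n = 0 then false else w)
  else if i = 2 then (if b0 = false then (if n = 0 then true else v) else u)
  else v

def x0dFun (p : Cantor × Fin 4) : Cantor × Fin 4 :=
  ((fun n => x0dCore p.2 n (p.1 0) (p.1 (n - 1)) (p.1 n) (p.1 (n + 1))),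
    x0dSheet p.2 (p.1 0))

def x0dInvFun (p : Cantor × Fin 4) : Cantor × Fin 4 :=
  ((fun n => x0dCoreInv p.2 n (p.1 0) (p.1 (n - 1)) (p.1 n) (p.1 (n + 1))),
    x0dSheetInv p.2 (p.1 0))

theorem x0d_left_inv : Function.LeftInverse x0dInvFun x0dFun := by
  rintro ⟨ξ, i⟩
  rcases hb0 : ξ 0 with _ | _ <;> fin_cases i <;>
    refine Prod.ext (funext fun n => ?_) ?_ <;>
    first
      | (rcases n with _ | n <;>
          simp [x0dFun, x0dInvFun, x0dCore, x0dCoreInv, x0dSheet, x0dSheetInv, hb0])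
      | simp [x0dFun, x0dInvFun, x0dCore, x0dCoreInv, x0dSheet, x0dSheetInv, hb0]

theorem x0d_right_inv : Function.RightInverse x0dInvFun x0dFun := by
  rintro ⟨ξ, i⟩
  rcases hb0 : ξ 0 with _ | _ <;> fin_cases i <;>
    refine Prod.ext (funext fun n => ?_) ?_ <;>
    first
      | (rcases n with _ | n <;>
          simp [x0dFun, x0dInvFun, x0dCore, x0dCoreInv, x0dSheet, x0dSheetInv, hb0])
      | simp [x0dFun, x0dInvFun, x0dCore, x0dCoreInv, x0dSheet, x0dSheetInv, hb0]

theorem x0dFun_continuous : Continuous x0dFun := by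
  have h : Continuous fun p : Cantor × Fin 4 => x0dFun (p.1, p.2) := by
    refine cont_fibered (Z := Cantor × Fin 4) (fun ξ i => x0dFun (ξ, i)) fun i => ?_
    refine Continuous.prodMk ?_ ?_
    · exact cantor_core_continuous fun n b0 _ _ w v u => x0dCore i n b0 w v u
    · exact Continuous.comp
        (continuous_of_discreteTopology (α := Bool) (f := x0dSheet i)) (continuous_apply 0)
  simpa using h

theorem x0dInvFun_continuous : Continuous x0dInvFun := by
  have h : Continuous fun p : Cantor × Fin 4 => x0dInvFun (p.1, p.2) := by
    refine cont_fibered (Z := Cantor × Fin 4) (fun ξ i => x0dInvFun (ξ, i)) fun i => ?_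
    refine Continuous.prodMk ?_ ?_
    · exact cantor_core_continuous fun n b0 _ _ w v u => x0dCoreInv i n b0 w v u
    · exact Continuous.comp
        (continuous_of_discreteTopology (α := Bool) (f := x0dSheetInv i)) (continuous_apply 0)
  simpa using h

def X0D : (Cantor × Fin 4) ≃ₜ (Cantor × Fin 4) where
  toEquiv := ⟨x0dFun, x0dInvFun, x0d_left_inv, x0d_right_inv⟩
  continuous_toFun := x0dFun_continuous
  continuous_invFun := x0dInvFun_continuous

/-- Reshuffling `C × (X_n × {1,…,4}) ≃ₜ (C × {1,…,4}) × X_n`. -/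
def reshuffle (n : ℕ) : Mn n ≃ₜ (Cantor × Fin 4) × XL n :=
  ((Homeomorph.refl Cantor).prodCongr (Homeomorph.prodComm (XL n) (Fin 4))).trans
    (Homeomorph.prodAssoc Cantor (Fin 4) (XL n)).symm

/-- `X₀^{(n)}`: acting as `X₀` on `D_n = C_{(ρ_n,2)} ⊔ C_{(ρ_n,3)}` (type 4). -/
def X0n (n : ℕ) : Mn n ≃ₜ Mn n :=
  (reshuffle n).trans ((fiberedHomeo fun x : XL n =>
    if x = rhoL n then X0D else Homeomorph.refl (Cantor × Fin 4)).trans (reshuffle n).symm)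

/-- The type 4 generators. -/
def Type4Set (n : ℕ) : Set (Mn n ≃ₜ Mn n) := {X0n n, X1n n}

/-- The generating set `T_n`. -/
def TnSet (n : ℕ) : Set (Mn n ≃ₜ Mn n) :=
  Type1Set n ∪ Type2Set n ∪ {tauN n} ∪ Type4Set n

/-- The group `W_n = ⟨T_n⟩`. -/
def Wn (n : ℕ) : Subgroup (Mn n ≃ₜ Mn n) := Subgroup.closure (TnSet n)

/-- The generators of types `2`, `3` and `4`. -/
def typeSet (n : ℕ) : ℕ → Set (Mn n ≃ₜ Mn n)
  | 2 => Type2Set n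
  | 3 => {tauN n}
  | 4 => Type4Set n
  | _ => ∅

end TV

end

noncomputable section

namespace CCAux

open Grig TV

/-! ### A potential function on the levels of the tree.

The level-`n` Schreier graph of the Grigorchuk group is a path with `ρ_n = 1^n` at one
end and `η_n = 1^{n-1}0` at the other; `φ` below is the position along this path. -/

/-- Parity (0 or 1) of the number of `false` letters in a word. -/
def par (w : List Bool) : ℤ := if Even (w.count false) then 0 else 1

theorem par_zero_or_one (w : List Bool) : par w = 0 ∨ par w = 1 := by
  unfold par; split <;> simp

theorem par_cons (x : Bool) (w : List Bool) :
    par (x :: w) = if x then par w else 1 - par w := by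
  rcases x with _ | _ <;>
    · simp only [par, List.count_cons]
      by_cases h : Even (w.count false) <;>
        simp [h, Nat.even_add_one]

/-- The position of a level-`n` vertex along the Schreier path. -/
def phi : List Bool → ℤ
  | [] => 0
  | x :: w => 2 * phi w + (if x then par w else 1 - par w)

/-- Displacement of the generator `a`. -/
def Ef (w : List Bool) : ℤ := if w = [] then 0 else 1 - 2 * par w

theorem aFun_cons (x : Bool) (w : List Bool) : aFun (x :: w) = (!x) :: w := by simp [aFun]
theorem bFun_false (w : List Bool) : bFun (false :: w) = false :: aFun w := by simp [bFun]
theorem bFun_true (w : List Bool) : bFun (true :: w) = true :: cFun w := by simp [bFun]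
theorem cFun_false (w : List Bool) : cFun (false :: w) = false :: aFun w := by simp [cFun]
theorem cFun_true (w : List Bool) : cFun (true :: w) = true :: dFun w := by simp [cFun]
theorem dFun_false (w : List Bool) : dFun (false :: w) = false :: w := by simp [dFun]
theorem dFun_true (w : List Bool) : dFun (true :: w) = true :: bFun w := by simp [dFun]

theorem phi_cons (x : Bool) (w : List Bool) :
    phi (x :: w) = 2 * phi w + (if x then par w else 1 - par w) := rfl

theorem Ef_cons (x : Bool) (w : List Bool) : Ef (x :: w) = 1 - 2 * par (x :: w) := by
  simp [Ef]

/-- Exact displacements of the Grigorchuk generators along the path. -/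
theorem main_disp (w : List Bool) :
    (phi (aFun w) = phi w + Ef w ∧ (w ≠ [] → par (aFun w) = 1 - par w)) ∧
    ((phi (bFun w) = phi w ∧ par (bFun w) = par w) ∨
      (phi (bFun w) = phi w - Ef w ∧ par (bFun w) = 1 - par w ∧ w ≠ [])) ∧
    ((phi (cFun w) = phi w ∧ par (cFun w) = par w) ∨
      (phi (cFun w) = phi w - Ef w ∧ par (cFun w) = 1 - par w ∧ w ≠ [])) ∧
    ((phi (dFun w) = phi w ∧ par (dFun w) = par w) ∨
      (phi (dFun w) = phi w - Ef w ∧ par (dFun w) = 1 - par w ∧ w ≠ [])) := by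
  induction w with
  | nil =>
    refine ⟨⟨rfl, by simp⟩, Or.inl ⟨rfl, rfl⟩, Or.inl ⟨rfl, rfl⟩, Or.inl ⟨rfl, rfl⟩⟩
  | cons x w ih =>
    obtain ⟨⟨ha1, ha2⟩, ihb, ihc, ihd⟩ := ih
    by_cases hw : w = []
    · subst hw
      rcases x with _ | _ <;>
        refine ⟨⟨?_, fun _ => ?_⟩, Or.inl ⟨?_, ?_⟩, Or.inl ⟨?_, ?_⟩, Or.inl ⟨?_, ?_⟩⟩ <;>
        simp [aFun, bFun, cFun, dFun, phi, par, Ef] <;> norm_num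
    · have hpar01 := par_zero_or_one w
      have hE : Ef w = 1 - 2 * par w := by simp [Ef, hw]
      have ha2' := ha2 hw
      rcases x with _ | _
      · -- x = false : all of a,b,c act via `a` on the tail; d is trivial
        refine ⟨⟨?_, fun _ => ?_⟩, Or.inr ⟨?_, ?_, by simp⟩,
          Or.inr ⟨?_, ?_, by simp⟩, Or.inl ⟨?_, ?_⟩⟩ <;>
          simp [aFun_cons, bFun_false, cFun_false, dFun_false, Bool.not_false,
            phi_cons, par_cons, Ef_cons, ha1, ha2', hE, if_true, if_false,
            Bool.ite_eq_true_distrib] <;>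
          omega
      · -- x = true : b,c,d act via c,d,b on the tail
        refine ⟨⟨?_, fun _ => ?_⟩, ?_, ?_, ?_⟩
        · simp [aFun_cons, Bool.not_true, phi_cons, par_cons, Ef_cons,
            if_true, if_false]
          omega
        · simp [aFun_cons, Bool.not_true, par_cons, if_true, if_false]
        · rcases ihc with ⟨h1, h2⟩ | ⟨h1, h2, h3⟩
          · exact Or.inl (by simp [bFun_true, phi_cons, par_cons, h1, h2, if_true])
          · refine Or.inr ⟨?_, ?_, by simp⟩ <;>
              simp [bFun_true, phi_cons, par_cons, Ef_cons, h1, h2, hE, if_true] <;>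
              omega
        · rcases ihd with ⟨h1, h2⟩ | ⟨h1, h2, h3⟩
          · exact Or.inl (by simp [cFun_true, phi_cons, par_cons, h1, h2, if_true])
          · refine Or.inr ⟨?_, ?_, by simp⟩ <;>
              simp [cFun_true, phi_cons, par_cons, Ef_cons, h1, h2, hE, if_true] <;>
              omega
        · rcases ihb with ⟨h1, h2⟩ | ⟨h1, h2, h3⟩
          · exact Or.inl (by simp [dFun_true, phi_cons, par_cons, h1, h2, if_true])
          · refine Or.inr ⟨?_, ?_, by simp⟩ <;>
              simp [dFun_true, phi_cons, par_cons, Ef_cons, h1, h2, hE, if_true] <;>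
              omega

theorem abs_Ef_le (w : List Bool) : |Ef w| ≤ 1 := by
  rcases par_zero_or_one w with h | h <;> unfold Ef <;> split <;> simp [h]

theorem step_bound (f : List Bool → List Bool)
    (hf : f = aFun ∨ f = bFun ∨ f = cFun ∨ f = dFun) (w : List Bool) :
    |phi (f w) - phi w| ≤ 1 := by
  have hE := abs_Ef_le w
  obtain ⟨⟨ha, -⟩, hb, hc, hd⟩ := main_disp w
  rcases hf with rfl | rfl | rfl | rfl
  · rw [ha]; simpa using hE
  · rcases hb with ⟨h, -⟩ | ⟨h, -⟩ <;> rw [h] <;> simp <;> simpa using hE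
  · rcases hc with ⟨h, -⟩ | ⟨h, -⟩ <;> rw [h] <;> simp <;> simpa using hE
  · rcases hd with ⟨h, -⟩ | ⟨h, -⟩ <;> rw [h] <;> simp <;> simpa using hE

/-! ### Values of the potential at `ρ`, `θ`, `η` -/

theorem phi_par_rep (k : ℕ) :
    phi (List.replicate k true) = 0 ∧ par (List.replicate k true) = 0 := by
  induction k with
  | zero => exact ⟨rfl, rfl⟩
  | succ k ih => simp [List.replicate_succ, phi, par_cons, ih.1, ih.2]

theorem phi_par_eta (k : ℕ) :
    phi (List.replicate k true ++ [false]) = 2 ^ (k + 1) - 1 ∧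
      par (List.replicate k true ++ [false]) = 1 := by
  induction k with
  | zero => refine ⟨?_, ?_⟩ <;> simp [phi, par] <;> rfl
  | succ k ih =>
    rw [List.replicate_succ, List.cons_append]
    refine ⟨?_, ?_⟩ <;> simp [phi, par_cons, ih.1, ih.2] <;> ring

/-! ### Transfer to level `n` -/

theorem ofFn_levelFun {n : ℕ} (f : List Bool → List Bool)
    (hlen : ∀ l, (f l).length = l.length) (v : Fin n → Bool) :
    List.ofFn (levelFun n f v) = f (List.ofFn v) := by
  apply List.ext_getElem
  · simp [hlen]
  · intro i h1 h2
    simp only [List.getElem_ofFn]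
    simp [levelFun, List.getD_eq_getElem, h2]

/-- The potential on level `n`. -/
def Phi (n : ℕ) (v : XL n) : ℤ := phi (List.ofFn v)

theorem Phi_gen_bound {n : ℕ} {s : Equiv.Perm (XL n)}
    (hs : s = aLev n ∨ s = bLev n ∨ s = cLev n ∨ s = dLev n) (v : XL n) :
    |Phi n (s v) - Phi n v| ≤ 1 := by
  rcases hs with rfl | rfl | rfl | rfl
  · show |phi (List.ofFn (levelFun n aFun v)) - phi (List.ofFn v)| ≤ 1
    rw [ofFn_levelFun aFun aFun_length]
    exact step_bound aFun (Or.inl rfl) _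
  · show |phi (List.ofFn (levelFun n bFun v)) - phi (List.ofFn v)| ≤ 1
    rw [ofFn_levelFun bFun bFun_length]
    exact step_bound bFun (Or.inr (Or.inl rfl)) _
  · show |phi (List.ofFn (levelFun n cFun v)) - phi (List.ofFn v)| ≤ 1
    rw [ofFn_levelFun cFun cFun_length]
    exact step_bound cFun (Or.inr (Or.inr (Or.inl rfl))) _
  · show |phi (List.ofFn (levelFun n dFun v)) - phi (List.ofFn v)| ≤ 1
    rw [ofFn_levelFun dFun dFun_length]
    exact step_bound dFun (Or.inr (Or.inr (Or.inr rfl))) _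

theorem Phi_prod_bound {n : ℕ} (lp : List (Equiv.Perm (XL n)))
    (h : ∀ s ∈ lp, ∀ v, |Phi n (s v) - Phi n v| ≤ 1) (v : XL n) :
    |Phi n (lp.prod v) - Phi n v| ≤ (lp.length : ℤ) := by
  induction lp generalizing v with
  | nil => simp
  | cons s t ih =>
    rw [List.prod_cons, Equiv.Perm.mul_apply]
    have b1 := h s (List.mem_cons_self) (t.prod v)
    have b2 := ih (fun x hx => h x (List.mem_cons_of_mem _ hx)) v
    have tri := abs_sub_le (Phi n (s (t.prod v))) (Phi n (t.prod v)) (Phi n v)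
    simp only [List.length_cons]
    push_cast
    linarith

/-! ### Values of the potential at the distinguished vertices -/

theorem Phi_rho (n : ℕ) : Phi n (rhoL n) = 0 := by
  show phi (List.ofFn fun _ : Fin n => true) = 0
  rw [List.ofFn_const]
  exact (phi_par_rep n).1

theorem ofFn_theta {n : ℕ} (hn : 1 ≤ n) :
    List.ofFn (thetaL n) = false :: List.replicate (n - 1) true := by
  apply List.ext_getElem
  · simp; omega
  · intro i h1 h2
    simp only [List.getElem_ofFn]
    rcases i with _ | j
    · simp [thetaL]
    · have hj : j < n - 1 := by simp at h1; omega
      simp [thetaL, List.getElem_cons_succ, List.getElem_replicate]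

theorem Phi_theta {n : ℕ} (hn : 1 ≤ n) : Phi n (thetaL n) = 1 := by
  show phi (List.ofFn (thetaL n)) = 1
  rw [ofFn_theta hn, phi_cons, (phi_par_rep (n - 1)).1, (phi_par_rep (n - 1)).2]
  norm_num

theorem ofFn_eta {n : ℕ} (hn : 1 ≤ n) :
    List.ofFn (etaL n) = List.replicate (n - 1) true ++ [false] := by
  apply List.ext_getElem
  · simp; omega
  · intro i h1 h2
    simp only [List.getElem_ofFn]
    by_cases hi : i < n - 1
    · rw [List.getElem_append_left (by simpa using hi)]
      simp [etaL, List.getElem_replicate, hi]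
    · have hlen : i = n - 1 := by simp at h1; omega
      rw [List.getElem_append_right (by simpa using hi)]
      simp [etaL, hlen]

theorem Phi_eta {n : ℕ} (hn : 1 ≤ n) : Phi n (etaL n) = 2 ^ n - 1 := by
  show phi (List.ofFn (etaL n)) = 2 ^ n - 1
  rw [ofFn_eta hn, (phi_par_eta (n - 1)).1]
  congr 2
  omega

/-! ### The distance lemma -/

theorem keyNE {n : ℕ} (hn : 4 ≤ n) (G G' : Equiv.Perm (XL n))
    (hG : ∀ v, |Phi n (G v) - Phi n v| ≤ (2 ^ (n / 2) : ℤ))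
    (hG' : ∀ v, |Phi n (G' v) - Phi n v| ≤ (2 ^ (n / 2) : ℤ))
    (x : XL n) (hx : G x = etaL n) :
    G' x ≠ rhoL n ∧ G' x ≠ thetaL n := by
  have h1 := hG x
  rw [hx, Phi_eta (by omega)] at h1
  have h2r : 2 * (2 : ℤ) ^ (n / 2) ≤ 2 ^ (n - 1) := by
    calc 2 * (2 : ℤ) ^ (n / 2) = 2 ^ (n / 2 + 1) := by ring
    _ ≤ 2 ^ (n - 1) := pow_le_pow_right₀ (by norm_num) (by omega)
  have h8 : (8 : ℤ) ≤ 2 ^ (n - 1) := by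
    calc (8 : ℤ) = 2 ^ 3 := by norm_num
    _ ≤ 2 ^ (n - 1) := pow_le_pow_right₀ (by norm_num) (by omega)
  have hpow : (2 : ℤ) * 2 ^ (n - 1) = 2 ^ n := by
    rw [← pow_succ']
    congr 1
    omega
  obtain ⟨h1a, h1b⟩ := abs_le.mp h1
  constructor
  · intro hc
    have h2 := hG' x
    rw [hc, Phi_rho] at h2
    obtain ⟨h2a, h2b⟩ := abs_le.mp h2
    linarith
  · intro hc
    have h2 := hG' x
    rw [hc, Phi_theta (by omega)] at h2
    obtain ⟨h2a, h2b⟩ := abs_le.mp h2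
    linarith

/-! ### Supports and commutation in the homeomorphism group -/

section Homeo

variable {n : ℕ}

theorem hmul_apply (u v : Mn n ≃ₜ Mn n) (z : Mn n) : (u * v) z = u (v z) := rfl

/-- `u` is supported in `S` : it is the identity off `S` and preserves `S`. -/
def SuppIn (u : Mn n ≃ₜ Mn n) (S : Set (Mn n)) : Prop :=
  (∀ z, z ∉ S → u z = z) ∧ ∀ z ∈ S, u z ∈ S

theorem commute_of_disjoint {u v : Mn n ≃ₜ Mn n} {S T : Set (Mn n)}
    (hu : SuppIn u S) (hv : SuppIn v T) (hd : ∀ z, z ∈ S → z ∉ T) :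
    Commute u v := by
  have key : ∀ z, u (v z) = v (u z) := by
    intro z
    by_cases hzS : z ∈ S
    · rw [hv.1 z (hd z hzS), hv.1 (u z) (hd _ (hu.2 z hzS))]
    · by_cases hzT : z ∈ T
      · rw [hu.1 (v z) (fun h => hd _ h (hv.2 z hzT)), hu.1 z hzS]
      · rw [hv.1 z hzT, hu.1 z hzS, hv.1 z hzT]
  have : u * v = v * u := Homeomorph.ext fun z => key z
  exact this

/-- `h` acts diagonally through the level permutation `G`. -/
def IsT1 (h : Mn n ≃ₜ Mn n) (G : Equiv.Perm (XL n)) : Prop :=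
  ∀ z : Mn n, h z = (z.1, (G z.2.1, z.2.2))

theorem isT1_one : IsT1 (1 : Mn n ≃ₜ Mn n) 1 := by
  rintro ⟨ξ, x, i⟩
  rfl

theorem isT1_type1Gen (s : Equiv.Perm (XL n)) : IsT1 (type1Gen n s) s := by
  rintro ⟨ξ, x, i⟩
  rfl

theorem IsT1.mul {h h' : Mn n ≃ₜ Mn n} {G G' : Equiv.Perm (XL n)}
    (hh : IsT1 h G) (hh' : IsT1 h' G') : IsT1 (h * h') (G * G') := by
  intro z
  rw [hmul_apply, hh' z, hh ((z.1, (G' z.2.1, z.2.2)) : Mn n)]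
  rfl

theorem prodIsT1 (lg : List (Mn n ≃ₜ Mn n)) (h : ∀ x ∈ lg, x ∈ Type1Set n) :
    ∃ G : Equiv.Perm (XL n), IsT1 lg.prod G ∧
      ∀ v, |Phi n (G v) - Phi n v| ≤ (lg.length : ℤ) := by
  induction lg with
  | nil =>
    refine ⟨1, by simpa using isT1_one, fun v => ?_⟩
    simp
  | cons x t ih =>
    obtain ⟨G, hG, hGb⟩ := ih fun y hy => h y (List.mem_cons_of_mem _ hy)
    have hx := h x (List.mem_cons_self)
    have hxs : ∃ s : Equiv.Perm (XL n),
        (s = aLev n ∨ s = bLev n ∨ s = cLev n ∨ s = dLev n) ∧ x = type1Gen n s := by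
      simp only [Type1Set, Set.mem_insert_iff, Set.mem_singleton_iff] at hx
      rcases hx with rfl | rfl | rfl | rfl
      exacts [⟨_, Or.inl rfl, rfl⟩, ⟨_, Or.inr (Or.inl rfl), rfl⟩,
        ⟨_, Or.inr (Or.inr (Or.inl rfl)), rfl⟩, ⟨_, Or.inr (Or.inr (Or.inr rfl)), rfl⟩]
    obtain ⟨s, hs, rfl⟩ := hxs
    refine ⟨s * G, ?_, fun v => ?_⟩
    · rw [List.prod_cons]
      exact (isT1_type1Gen s).mul hG
    · have b1 := Phi_gen_bound hs (G v)
      have b2 := hGb v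
      have tri := abs_sub_le (Phi n (s (G v))) (Phi n (G v)) (Phi n v)
      rw [Equiv.Perm.mul_apply]
      simp only [List.length_cons]
      push_cast
      linarith

theorem conj_supp {h σ : Mn n ≃ₜ Mn n} {G : Equiv.Perm (XL n)} {S : Set (Mn n)}
    (hh : IsT1 h G) (hσ : SuppIn σ S) :
    SuppIn (h⁻¹ * σ * h) {z : Mn n | ((z.1, (G z.2.1, z.2.2)) : Mn n) ∈ S} := by
  have happ : ∀ z : Mn n, (h⁻¹ * σ * h) z = h.symm (σ (h z)) := fun z => rfl
  constructor
  · intro z hz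
    rw [happ, hσ.1 (h z) (by rw [hh z]; exact hz), Homeomorph.symm_apply_apply]
  · intro z hz
    rw [happ]
    have hwS : σ (h z) ∈ S := hσ.2 (h z) (by rw [hh z]; exact hz)
    show ((h.symm (σ (h z))).1, (G (h.symm (σ (h z))).2.1, (h.symm (σ (h z))).2.2)) ∈ S
    rw [← hh (h.symm (σ (h z))), Homeomorph.apply_symm_apply]
    exact hwS

/-! ### Supports of the generators of types 2, 3, 4 -/

/-- The reference support sets (vertex condition transported by `H`, plus a sheet
condition). -/
def suppSet (n : ℕ) (H : XL n → XL n) : ℕ → Set (Mn n)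
  | 2 => {z | H z.2.1 = etaL n}
  | 3 => {z | (H z.2.1 = rhoL n ∨ H z.2.1 = thetaL n) ∧ z.2.2 = 0}
  | 4 => {z | H z.2.1 = rhoL n ∧ z.2.2 ≠ 0}
  | _ => ∅

theorem type2Gen_apply (π : Equiv.Perm (Fin 4)) (ξ : Cantor) (x : XL n) (i : Fin 4) :
    type2Gen n π (ξ, (x, i)) = (ξ, (x, (if x = etaL n then π else Equiv.refl (Fin 4)) i)) :=
  rfl

theorem tauN_apply (ξ : Cantor) (y : XL n × Fin 4) :
    tauN n (ξ, y) = (ξ, Equiv.swap (rhoL n, (0 : Fin 4)) (thetaL n, (0 : Fin 4)) y) :=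
  rfl

theorem X1n_apply (ξ : Cantor) (y : XL n × Fin 4) :
    X1n n (ξ, y) = ((if y = (rhoL n, (3 : Fin 4)) then X0c else Homeomorph.refl Cantor) ξ, y) :=
  rfl

theorem X0n_apply (ξ : Cantor) (x : XL n) (i : Fin 4) :
    X0n n (ξ, (x, i)) =
      (((if x = rhoL n then X0D else Homeomorph.refl (Cantor × Fin 4)) (ξ, i)).1,
        (x, ((if x = rhoL n then X0D else Homeomorph.refl (Cantor × Fin 4)) (ξ, i)).2)) :=
  rfl

theorem X0D_fix0 (ξ : Cantor) : X0D (ξ, (0 : Fin 4)) = (ξ, 0) := by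
  refine Prod.ext (funext fun m => ?_) ?_
  · show x0dCore 0 m (ξ 0) (ξ (m - 1)) (ξ m) (ξ (m + 1)) = ξ m
    simp [x0dCore]
  · show x0dSheet 0 (ξ 0) = 0
    simp [x0dSheet]

theorem X0D_sheet_ne0 (ξ : Cantor) (i : Fin 4) (hi : i ≠ 0) : (X0D (ξ, i)).2 ≠ 0 := by
  show x0dSheet i (ξ 0) ≠ 0
  unfold x0dSheet
  fin_cases i <;> rcases h0 : ξ 0 with _ | _ <;> simp_all <;> decide

theorem supp_sigma {j : ℕ} (hj : j = 2 ∨ j = 3 ∨ j = 4) {σ : Mn n ≃ₜ Mn n}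
    (hσ : σ ∈ typeSet n j) : SuppIn σ (suppSet n (fun x => x) j) := by
  rcases hj with rfl | rfl | rfl
  · obtain ⟨π, rfl⟩ := hσ
    constructor
    · rintro ⟨ξ, x, i⟩ hz
      simp only [suppSet, Set.mem_setOf_eq] at hz
      rw [type2Gen_apply, if_neg hz]
      rfl
    · rintro ⟨ξ, x, i⟩ hz
      simp only [suppSet, Set.mem_setOf_eq] at hz ⊢
      exact hz
  · obtain rfl : σ = tauN n := hσ
    constructor
    · rintro ⟨ξ, y⟩ hz
      simp only [suppSet, Set.mem_setOf_eq, not_and_or] at hz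
      have h1 : y ≠ (rhoL n, (0 : Fin 4)) := by
        rintro rfl
        rcases hz with hz | hz
        · exact hz (Or.inl rfl)
        · exact hz rfl
      have h2 : y ≠ (thetaL n, (0 : Fin 4)) := by
        rintro rfl
        rcases hz with hz | hz
        · exact hz (Or.inr rfl)
        · exact hz rfl
      rw [tauN_apply, Equiv.swap_apply_of_ne_of_ne h1 h2]
    · rintro ⟨ξ, y1, y2⟩ hz
      simp only [suppSet, Set.mem_setOf_eq] at hz
      obtain ⟨hy1, hy2⟩ := hz
      subst hy2
      rcases hy1 with rfl | rfl
      · rw [tauN_apply, Equiv.swap_apply_left]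
        simp [suppSet]
      · rw [tauN_apply, Equiv.swap_apply_right]
        simp [suppSet]
  · have hσ' : σ = X0n n ∨ σ = X1n n := hσ
    rcases hσ' with rfl | rfl
    · constructor
      · rintro ⟨ξ, x, i⟩ hz
        simp only [suppSet, Set.mem_setOf_eq, not_and, ne_eq, not_not] at hz
        by_cases hx : x = rhoL n
        · obtain rfl : i = 0 := hz hx
          subst hx
          rw [X0n_apply, if_pos rfl, X0D_fix0]
        · rw [X0n_apply, if_neg hx]
          rfl
      · rintro ⟨ξ, x, i⟩ hz
        simp only [suppSet, Set.mem_setOf_eq, ne_eq] at hz ⊢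
        obtain ⟨hx, hi⟩ := hz
        subst hx
        rw [X0n_apply, if_pos rfl]
        exact ⟨rfl, X0D_sheet_ne0 ξ i hi⟩
    · constructor
      · rintro ⟨ξ, x, i⟩ hz
        simp only [suppSet, Set.mem_setOf_eq, not_and, ne_eq, not_not] at hz
        have hy : (x, i) ≠ (rhoL n, (3 : Fin 4)) := by
          intro h
          have hx : x = rhoL n := congrArg Prod.fst h
          have hi : i = 3 := congrArg Prod.snd h
          rw [hz hx] at hi
          exact absurd hi (by decide)
        rw [X1n_apply, if_neg hy]
        rfl
      · rintro ⟨ξ, x, i⟩ hz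
        simp only [suppSet, Set.mem_setOf_eq, ne_eq] at hz ⊢
        rw [X1n_apply]
        exact hz

end Homeo

end CCAux

noncomputable section

/-- **Commuting conjugates:** for every sufficiently large `n`, if `g` and `g'` are
words of length at most `r_n = 2^⌊n/2⌋` over `S_n` (the type 1 generators), and
`σ, σ'` are generators of two distinct types among the types `2`, `3`, `4`, then the
conjugates `σ^g = g⁻¹σg` and `σ'^{g'} = g'⁻¹σ'g'` commute in `V_{Y_n}`. -/
theorem commuting_conjugates :
    ∃ N : ℕ, ∀ n : ℕ, N ≤ n →
      ∀ lg lg' : List (TV.Mn n ≃ₜ TV.Mn n),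
        (∀ x ∈ lg, x ∈ TV.Type1Set n) → (∀ x ∈ lg', x ∈ TV.Type1Set n) →
        lg.length ≤ 2 ^ (n / 2) → lg'.length ≤ 2 ^ (n / 2) →
        ∀ j j' : ℕ, j ∈ ({2, 3, 4} : Set ℕ) → j' ∈ ({2, 3, 4} : Set ℕ) → j ≠ j' →
        ∀ σ ∈ TV.typeSet n j, ∀ σ' ∈ TV.typeSet n j',
          Commute (lg.prod⁻¹ * σ * lg.prod) (lg'.prod⁻¹ * σ' * lg'.prod) := by
  classical
  refine ⟨4, fun n hn lg lg' h1 h1' hlen hlen' j j' hj hj' hne σ hσ σ' hσ' => ?_⟩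
  open CCAux TV in
  · obtain ⟨G, hGT, hGb⟩ := prodIsT1 lg h1
    obtain ⟨G', hGT', hGb'⟩ := prodIsT1 lg' h1'
    have hGr : ∀ v, |Phi n (G v) - Phi n v| ≤ (2 ^ (n / 2) : ℤ) := fun v =>
      (hGb v).trans (by exact_mod_cast hlen)
    have hGr' : ∀ v, |Phi n (G' v) - Phi n v| ≤ (2 ^ (n / 2) : ℤ) := fun v =>
      (hGb' v).trans (by exact_mod_cast hlen')
    have hj2 : j = 2 ∨ j = 3 ∨ j = 4 := by simpa using hj
    have hj'2 : j' = 2 ∨ j' = 3 ∨ j' = 4 := by simpa using hj'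
    refine commute_of_disjoint (conj_supp hGT (supp_sigma hj2 hσ))
      (conj_supp hGT' (supp_sigma hj'2 hσ')) ?_
    intro z hz1 hz2
    rcases hj2 with rfl | rfl | rfl <;> rcases hj'2 with rfl | rfl | rfl <;>
        simp only [suppSet, Set.mem_setOf_eq] at hz1 hz2
    · exact hne rfl
    · obtain ⟨key1, key2⟩ := keyNE hn G G' hGr hGr' z.2.1 hz1
      rcases hz2.1 with hc | hc
      · exact key1 hc
      · exact key2 hc
    · exact (keyNE hn G G' hGr hGr' z.2.1 hz1).1 hz2.1
    · obtain ⟨key1, key2⟩ := keyNE hn G' G hGr' hGr z.2.1 hz2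
      rcases hz1.1 with hc | hc
      · exact key1 hc
      · exact key2 hc
    · exact hne rfl
    · exact hz2.2 hz1.2
    · exact (keyNE hn G' G hGr' hGr z.2.1 hz2).1 hz1.1
    · exact hz1.2 hz2.2
    · exact hne rfl

end
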